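/- Let v₁,…,v_k be an orthonormal tuple in ℓ² and V₁,…,V_k closed infinite-dimensional pairwise orthogonal subspaces with vᵢ ∈ Vᵢ. Suppose H is a closed subspace such that Hᵢ = Vᵢ ∩ H is infinite-dimensional and π_{Hᵢ}(vᵢ) ≠ 0 for each i. Then there exists ε > 0 such that: for every tuple (v₁',…,v_k') of pairwise orthogonal unit vectors with vᵢ' ∈ Vᵢ and ‖vᵢ' − vᵢ‖ < ε, there exists a tuple (v₁'',…,v_k'') of pairwise orthogonal unit vectors with vᵢ'' − vᵢ ∈ Hᵢ and ‖vᵢ'' − vᵢ‖ = ‖vᵢ' − vᵢ‖ and ⟨vᵢ'', v_j⟩ = ⟨vᵢ', v_j⟩ for all i, j. -/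

import Mathlib

open scoped RealInnerProductSpace

/-!
Write `Hᵢ = Vᵢ ⊓ K`. As `vᵢ ∉ Hᵢᗮ` and `Hᵢ` is infinite-dimensional, `Hᵢ` contains a unit vector
`e` with `⟪e, vᵢ⟫ ≠ 0` and a unit vector `u` orthogonal to `e` and `vᵢ`. Combining the two, for
every small `r ≥ 0` there is `w ∈ Hᵢ` with `‖w‖ = r` and `⟪w, vᵢ⟫ = -r²/2`, which says exactly that
`vᵢ + w` is a unit vector at distance `r` from `vᵢ`; take `r = ‖vᵢ' - vᵢ‖` and `vᵢ'' = vᵢ + w`.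
For unit vectors `⟪x, vᵢ⟫ = 1 - ‖x - vᵢ‖² / 2`, so `⟪vᵢ'', vᵢ⟫ = ⟪vᵢ', vᵢ⟫`, and every other inner
product vanishes because the `Vᵢ` are mutually orthogonal.
-/

open Filter Topology

theorem real_inner_eq_one_sub_norm_sub_sq_div_two {E : Type*} [NormedAddCommGroup E]
    [InnerProductSpace ℝ E] {x y : E} (hx : ‖x‖ = 1) (hy : ‖y‖ = 1) :
    ⟪x, y⟫ = 1 - ‖x - y‖ ^ 2 / 2 := by
  rw [norm_sub_sq_real, hx, hy]; ring

theorem Submodule.exists_norm_eq_one_forall_inner_eq_zero {𝕜 E ι : Type*} [RCLike 𝕜]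
    [NormedAddCommGroup E] [InnerProductSpace 𝕜 E] [Finite ι] (H : Submodule 𝕜 E)
    (hH : ¬FiniteDimensional 𝕜 H) (x : ι → E) :
    ∃ u ∈ H, ‖u‖ = 1 ∧ ∀ i, inner 𝕜 (x i) u = 0 := by
  let f : H →ₗ[𝕜] ι → 𝕜 := LinearMap.pi fun i => (innerₛₗ 𝕜 (x i)).comp H.subtype
  obtain ⟨y, hy, hy0⟩ : ∃ y ∈ LinearMap.ker f, y ≠ 0 := by
    by_contra! h
    exact hH <| Module.Finite.of_injective f <| LinearMap.ker_eq_bot.1 <| LinearMap.ker_eq_bot'.2 h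
  have hy0' : (y : E) ≠ 0 := by simpa using hy0
  refine ⟨(‖(y : E)‖⁻¹ : 𝕜) • (y : E), H.smul_mem _ y.2, norm_smul_inv_norm hy0', fun i => ?_⟩
  have : inner 𝕜 (x i) (y : E) = 0 := congr_fun hy i
  simp [inner_smul_right, this]

theorem Submodule.exists_mem_norm_eq_inner_eq {E : Type*} [NormedAddCommGroup E]
    [InnerProductSpace ℝ E] {H : Submodule ℝ E} (hH : ¬FiniteDimensional ℝ H) {v : E}
    (hv : v ∉ Hᗮ) :
    ∃ a > 0, ∀ r c : ℝ, 0 ≤ r → |c| ≤ a * r → ∃ w ∈ H, ‖w‖ = r ∧ ⟪w, v⟫ = c := by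
  obtain ⟨e, heH, he1, hev⟩ : ∃ e ∈ H, ‖e‖ = 1 ∧ ⟪e, v⟫ ≠ 0 := by
    obtain ⟨h, hhH, hhv⟩ : ∃ h ∈ H, ⟪h, v⟫ ≠ 0 := by
      simpa [Submodule.mem_orthogonal] using hv
    have hh0 : h ≠ 0 := by rintro rfl; simp at hhv
    exact ⟨(‖h‖⁻¹ : ℝ) • h, H.smul_mem _ hhH, norm_smul_inv_norm hh0, by
      simp [real_inner_smul_left, hh0, hhv]⟩
  obtain ⟨u, huH, hu1, hu⟩ := H.exists_norm_eq_one_forall_inner_eq_zero hH ![e, v]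
  have heu : ⟪e, u⟫ = 0 := hu 0
  have hvu : ⟪u, v⟫ = 0 := by rw [real_inner_comm]; exact hu 1
  refine ⟨|⟪e, v⟫|, abs_pos.2 hev, fun r c hr hc => ?_⟩
  set α := c / ⟪e, v⟫
  have hα : α ^ 2 ≤ r ^ 2 := by
    rw [div_pow, div_le_iff₀ (by positivity), ← sq_abs c, ← sq_abs ⟪e, v⟫, ← mul_pow]
    exact pow_le_pow_left₀ (abs_nonneg c) (by linarith) 2
  refine ⟨α • e + √(r ^ 2 - α ^ 2) • u, H.add_mem (H.smul_mem _ heH) (H.smul_mem _ huH), ?_,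
    by simp [inner_add_left, real_inner_smul_left, hvu, α, hev]⟩
  have hsq : ‖α • e + √(r ^ 2 - α ^ 2) • u‖ ^ 2 = r ^ 2 := by
    rw [norm_add_sq_real, real_inner_smul_left, real_inner_smul_right, heu, norm_smul, norm_smul,
      he1, hu1, Real.norm_eq_abs, Real.norm_eq_abs, abs_of_nonneg (Real.sqrt_nonneg _),
      mul_one, mul_one, sq_abs, Real.sq_sqrt (by linarith)]
    ring
  exact (pow_left_inj₀ (norm_nonneg _) hr two_ne_zero).1 hsq

theorem Submodule.eventually_exists_norm_eq_one_sub_mem_norm_sub_eq {E : Type*}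
    [NormedAddCommGroup E] [InnerProductSpace ℝ E] {H : Submodule ℝ E}
    (hH : ¬FiniteDimensional ℝ H) {v : E} (hv1 : ‖v‖ = 1) (hv : v ∉ Hᗮ) :
    ∀ᶠ r in 𝓝[≥] 0, ∃ x, ‖x‖ = 1 ∧ x - v ∈ H ∧ ‖x - v‖ = r := by
  obtain ⟨a, ha, hw⟩ := Submodule.exists_mem_norm_eq_inner_eq hH hv
  have h2a : (0 : ℝ) < 2 * a := by positivity
  filter_upwards [self_mem_nhdsWithin, nhdsWithin_le_nhds (Iio_mem_nhds h2a)]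
    with r (hr0 : 0 ≤ r) (hr : r < 2 * a)
  obtain ⟨w, hwH, hwr, hwv⟩ := hw r (-(r ^ 2 / 2)) hr0 <| by
    rw [abs_neg, abs_of_nonneg (by positivity)]; nlinarith
  refine ⟨v + w, ?_, by simpa using hwH, by simpa using hwr⟩
  have : ‖v + w‖ ^ 2 = 1 := by
    rw [norm_add_sq_real, hv1, hwr, real_inner_comm, hwv]; ring
  exact (pow_eq_one_iff_of_nonneg (norm_nonneg _) two_ne_zero).1 this

theorem tuple_perturbation_general {E : Type*} [NormedAddCommGroup E]
    [InnerProductSpace ℝ E]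
    (k : ℕ) (v : Fin k → E) (hv : Orthonormal ℝ v)
    (V : Fin k → Submodule ℝ E)
    (hVorth : ∀ i j, i ≠ j → ∀ x ∈ V i, ∀ y ∈ V j, ⟪x, y⟫ = 0)
    (hvV : ∀ i, v i ∈ V i)
    (K : Submodule ℝ E)
    (hHinf : ∀ i, ¬FiniteDimensional ℝ (V i ⊓ K : Submodule ℝ E))
    (hproj : ∀ i, v i ∉ (V i ⊓ K : Submodule ℝ E)ᗮ) :
    ∃ ε > (0 : ℝ), ∀ v' : Fin k → E,
      (∀ i, ‖v' i‖ = 1) → (∀ i j, i ≠ j → ⟪v' i, v' j⟫ = 0) →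
      (∀ i, v' i ∈ V i) → (∀ i, ‖v' i - v i‖ < ε) →
      ∃ v'' : Fin k → E,
        (∀ i, ‖v'' i‖ = 1) ∧ (∀ i j, i ≠ j → ⟪v'' i, v'' j⟫ = 0) ∧
        (∀ i, v'' i - v i ∈ (V i ⊓ K : Submodule ℝ E)) ∧
        (∀ i, ‖v'' i - v i‖ = ‖v' i - v i‖) ∧
        (∀ i j, ⟪v'' i, v j⟫ = ⟪v' i, v j⟫) := by
  have hsmall : ∀ᶠ r in 𝓝[≥] 0, ∀ i, ∃ x, ‖x‖ = 1 ∧ x - v i ∈ V i ⊓ K ∧ ‖x - v i‖ = r :=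
    eventually_all.2 fun i =>
      (V i ⊓ K).eventually_exists_norm_eq_one_sub_mem_norm_sub_eq (hHinf i) (hv.1 i) (hproj i)
  obtain ⟨ε, hε, hball⟩ := Metric.eventually_nhds_iff.1 (eventually_nhdsWithin_iff.1 hsmall)
  refine ⟨ε, hε, fun v' hv'1 _ hv'V hv'ε => ?_⟩
  choose v'' hv''1 hv''H hv''dist using fun i =>
    hball (by simpa using hv'ε i) (norm_nonneg (v' i - v i)) i
  have hv''V : ∀ i, v'' i ∈ V i := fun i =>
    ((V i).sub_mem_iff_left (hvV i)).1 (Submodule.mem_inf.1 (hv''H i)).1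
  refine ⟨v'', hv''1, fun i j hij => hVorth i j hij _ (hv''V i) _ (hv''V j), hv''H, hv''dist,
    fun i j => ?_⟩
  rcases eq_or_ne i j with rfl | hij
  · rw [real_inner_eq_one_sub_norm_sub_sq_div_two (hv''1 i) (hv.1 i), hv''dist,
      real_inner_eq_one_sub_norm_sub_sq_div_two (hv'1 i) (hv.1 i)]
  · rw [hVorth i j hij _ (hv''V i) _ (hvV j), hVorth i j hij _ (hv'V i) _ (hvV j)]

/-- Tuple version of the perturbation lemma: for an orthonormal tuple `vᵢ ∈ Vᵢ` in
pairwise orthogonal closed infinite-dimensional subspaces `Vᵢ`, and a closed subspace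
`K` with `Hᵢ = Vᵢ ⊓ K` infinite-dimensional and `π_{Hᵢ}(vᵢ) ≠ 0`, there is `ε > 0`
such that every orthonormal tuple `vᵢ' ∈ Vᵢ` with `‖vᵢ' − vᵢ‖ < ε` is matched by an
orthonormal tuple `vᵢ''` with `vᵢ'' − vᵢ ∈ Hᵢ`, `‖vᵢ'' − vᵢ‖ = ‖vᵢ' − vᵢ‖` and
`⟪vᵢ'', v_j⟫ = ⟪vᵢ', v_j⟫` for all `i, j`. -/
theorem tuple_perturbation {E : Type*} [NormedAddCommGroup E]
    [InnerProductSpace ℝ E] [CompleteSpace E] [TopologicalSpace.SeparableSpace E]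
    (hinf : ¬FiniteDimensional ℝ E)
    (k : ℕ) (v : Fin k → E) (hv : Orthonormal ℝ v)
    (V : Fin k → Submodule ℝ E)
    (hVclosed : ∀ i, IsClosed ((V i : Set E)))
    (hVinf : ∀ i, ¬FiniteDimensional ℝ (V i))
    (hVorth : ∀ i j, i ≠ j → ∀ x ∈ V i, ∀ y ∈ V j, ⟪x, y⟫ = 0)
    (hvV : ∀ i, v i ∈ V i)
    (K : Submodule ℝ E) (hKclosed : IsClosed (K : Set E))
    (hHinf : ∀ i, ¬FiniteDimensional ℝ (V i ⊓ K : Submodule ℝ E))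
    (hproj : ∀ i, v i ∉ (V i ⊓ K : Submodule ℝ E)ᗮ) :
    ∃ ε > (0 : ℝ), ∀ v' : Fin k → E,
      (∀ i, ‖v' i‖ = 1) → (∀ i j, i ≠ j → ⟪v' i, v' j⟫ = 0) →
      (∀ i, v' i ∈ V i) → (∀ i, ‖v' i - v i‖ < ε) →
      ∃ v'' : Fin k → E,
        (∀ i, ‖v'' i‖ = 1) ∧ (∀ i j, i ≠ j → ⟪v'' i, v'' j⟫ = 0) ∧
        (∀ i, v'' i - v i ∈ (V i ⊓ K : Submodule ℝ E)) ∧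
        (∀ i, ‖v'' i - v i‖ = ‖v' i - v i‖) ∧
        (∀ i j, ⟪v'' i, v j⟫ = ⟪v' i, v j⟫) :=
  tuple_perturbation_general k v hv V hVorth hvV K hHinf hproj
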